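/- Let Φ ∈ Δ' be a Young function in class 𝒴 and let f ∈ L^Φ_loc(ℝⁿ) with ‖f‖_{ℳ^{Φ,n}} := sup_{x,r} Φ^{-1}(|B(x,r)|^{-1})‖fχ_{B(x,r)}‖_{L^Φ} < ∞. Then ℳ^{Φ,n}(ℝⁿ) = L^∞(ℝⁿ) with ‖f‖_{ℳ^{Φ,n}} = ‖f‖_{L^∞}. -/

import Mathlib

open scoped ENNReal NNReal
open MeasureTheory Metric Filter Set

noncomputable section

/-- A Young function: convex, left-continuous, `Φ 0 = 0`, `Φ(0+)=0`, tends to `∞`. -/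
def IsYoung (Φ : ℝ≥0 → ℝ≥0∞) : Prop :=
  (∀ a b t : ℝ≥0, t ≤ 1 →
    Φ (t * a + (1 - t) * b) ≤ (t : ℝ≥0∞) * Φ a + ((1 - t : ℝ≥0) : ℝ≥0∞) * Φ b) ∧
  Φ 0 = 0 ∧
  (∀ r : ℝ≥0, Tendsto Φ (nhdsWithin r (Set.Iio r)) (nhds (Φ r))) ∧
  Tendsto Φ (nhdsWithin 0 (Set.Ioi 0)) (nhds 0) ∧
  Tendsto Φ atTop atTop

/-- The class `𝒴`: `0 < Φ r < ∞` for `0 < r`. -/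
def FinPos (Φ : ℝ≥0 → ℝ≥0∞) : Prop := ∀ r : ℝ≥0, 0 < r → 0 < Φ r ∧ Φ r ≠ ∞

/-- Generalized inverse `Φ⁻¹(s) = inf {r ≥ 0 : Φ r > s}`. -/
def yInv (Φ : ℝ≥0 → ℝ≥0∞) (s : ℝ≥0∞) : ℝ≥0∞ :=
  ⨅ (r : ℝ≥0) (_ : s < Φ r), (r : ℝ≥0∞)

/-- Extension of a Young function to `ℝ≥0∞`. -/
def yExt (Φ : ℝ≥0 → ℝ≥0∞) (s : ℝ≥0∞) : ℝ≥0∞ := if s = ∞ then ∞ else Φ s.toNNReal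

/-- Luxemburg (Orlicz) norm. -/
def luxNorm {E : Type*} [MeasurableSpace E] (μ : Measure E) (Φ : ℝ≥0 → ℝ≥0∞)
    (g : E → ℝ≥0∞) : ℝ≥0∞ :=
  ⨅ (lam : ℝ≥0) (_ : 0 < lam) (_ : ∫⁻ x, yExt Φ (g x / lam) ∂μ ≤ 1), (lam : ℝ≥0∞)

/-- Weak Orlicz quasinorm. -/
def wLuxNorm {E : Type*} [MeasurableSpace E] (μ : Measure E) (Φ : ℝ≥0 → ℝ≥0∞)
    (g : E → ℝ≥0∞) : ℝ≥0∞ :=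
  ⨅ (lam : ℝ≥0) (_ : 0 < lam)
    (_ : ∀ t : ℝ≥0, 0 < t → Φ (t / lam) * μ {x | (t : ℝ≥0∞) < g x} ≤ 1), (lam : ℝ≥0∞)

abbrev Rn (n : ℕ) := EuclideanSpace ℝ (Fin n)

/-- `|f|` as an `ℝ≥0∞`-valued function. -/
def eabs {E : Type*} (f : E → ℝ) : E → ℝ≥0∞ := fun x => (‖f x‖₊ : ℝ≥0∞)

/-- Centered fractional maximal operator. -/
def fracMax (n : ℕ) (α : ℝ) (g : Rn n → ℝ≥0∞) (x : Rn n) : ℝ≥0∞ :=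
  ⨆ (t : ℝ) (_ : 0 < t), volume (ball x t) ^ (α / (n : ℝ) - 1) * ∫⁻ y in ball x t, g y

/-- Uncentered fractional maximal operator. -/
def fracMaxUncentered (n : ℕ) (α : ℝ) (g : Rn n → ℝ≥0∞) (x : Rn n) : ℝ≥0∞ :=
  ⨆ (c : Rn n) (t : ℝ) (_ : 0 < t) (_ : x ∈ ball c t),
    volume (ball c t) ^ (α / (n : ℝ) - 1) * ∫⁻ y in ball c t, g y

/-- Riesz potential. -/
def riesz (n : ℕ) (α : ℝ) (g : Rn n → ℝ≥0∞) (x : Rn n) : ℝ≥0∞ :=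
  ∫⁻ y, g y / ENNReal.ofReal (dist x y ^ ((n : ℝ) - α))

end


section Aux

open scoped ENNReal NNReal
open MeasureTheory Metric Filter Set Topology

variable {Φ : ℝ≥0 → ℝ≥0∞}

lemma young_mono (hΦ : IsYoung Φ) : Monotone Φ := by
  intro a b hab
  rcases eq_or_ne b 0 with rfl | hb
  · simp [le_antisymm hab zero_le]
  · have ht : a / b ≤ 1 := div_le_one_of_le₀ hab zero_le
    have h := hΦ.1 b 0 (a / b) ht
    rw [div_mul_cancel₀ _ hb, mul_zero, add_zero, hΦ.2.1, mul_zero, add_zero] at h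
    exact h.trans (mul_le_of_le_one_left zero_le (by exact_mod_cast ht))

lemma yExt_coe (r : ℝ≥0) : yExt Φ r = Φ r := by simp [yExt]

lemma yExt_mono (hΦ : IsYoung Φ) : Monotone (yExt Φ) := by
  intro s t hst
  rcases eq_or_ne t ∞ with rfl | ht
  · simp [yExt]
  · have hs : s ≠ ∞ := ne_top_of_le_ne_top ht hst
    simp only [yExt, if_neg hs, if_neg ht]
    exact young_mono hΦ (ENNReal.toNNReal_mono ht hst)

lemma yInv_le {s : ℝ≥0∞} {r : ℝ≥0} (h : s < Φ r) : yInv Φ s ≤ r := by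
  unfold yInv; exact iInf₂_le r h

lemma le_yInv {s x : ℝ≥0∞} (h : ∀ r : ℝ≥0, s < Φ r → x ≤ r) : x ≤ yInv Φ s := by
  unfold yInv; exact le_iInf₂ h

lemma yInv_mono : Monotone (yInv Φ) := fun s t hst =>
  le_yInv fun r hr => yInv_le (lt_of_le_of_lt hst hr)

lemma yInv_lt_top (hΦ : IsYoung Φ) {s : ℝ≥0∞} (hs : s ≠ ∞) : yInv Φ s < ∞ := by
  obtain ⟨r, hr⟩ : ∃ r : ℝ≥0, s < Φ r := by
    obtain ⟨r, hr⟩ := (hΦ.2.2.2.2.eventually_ge_atTop (s + 1)).exists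
    exact ⟨r, lt_of_lt_of_le (ENNReal.lt_add_right hs one_ne_zero) hr⟩
  exact lt_of_le_of_lt (yInv_le hr) ENNReal.coe_lt_top

lemma yInv_pos (hΦ : IsYoung Φ) {s : ℝ≥0∞} (hs : 0 < s) : 0 < yInv Φ s := by
  have hev : ∀ᶠ r : ℝ≥0 in 𝓝[>] 0, Φ r < s :=
    hΦ.2.2.2.1.eventually_lt_const hs
  rw [eventually_nhdsWithin_iff] at hev
  obtain ⟨δ, hδ, hδ'⟩ := NNReal.nhds_zero_basis.eventually_iff.mp hev
  refine lt_of_lt_of_le (show (0:ℝ≥0∞) < δ by exact_mod_cast hδ) (le_yInv fun r hr => ?_)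
  by_contra hlt
  push_neg at hlt
  have hrδ : r < δ := by exact_mod_cast hlt
  rcases eq_or_ne r 0 with rfl | hr0
  · rw [hΦ.2.1] at hr; exact absurd hr (not_lt.mpr hs.le)
  · exact absurd hr (not_lt.mpr (hδ' hrδ (pos_iff_ne_zero.mpr hr0)).le)

lemma lt_apply_of_yInv_lt (hΦ : IsYoung Φ) {s : ℝ≥0∞} {u : ℝ≥0}
    (h : yInv Φ s < u) : s < Φ u := by
  unfold yInv at h
  obtain ⟨r, hr⟩ := iInf_lt_iff.mp h
  obtain ⟨hsr, hru⟩ := iInf_lt_iff.mp hr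
  exact lt_of_lt_of_le hsr (young_mono hΦ (by exact_mod_cast hru.le))

lemma apply_toNNReal_yInv_le (hΦ : IsYoung Φ) {s : ℝ≥0∞}
    (h0 : 0 < yInv Φ s) (htop : yInv Φ s ≠ ∞) :
    Φ (yInv Φ s).toNNReal ≤ s := by
  set c := (yInv Φ s).toNNReal with hc
  have hcoe : (c : ℝ≥0∞) = yInv Φ s := ENNReal.coe_toNNReal htop
  have hcpos : 0 < c := ENNReal.toNNReal_pos h0.ne' htop
  have hmem : ∀ r : ℝ≥0, r < c → Φ r ≤ s := by
    intro r hr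
    by_contra hgt
    push_neg at hgt
    have h1 : yInv Φ s ≤ r := yInv_le hgt
    rw [← hcoe] at h1
    exact absurd hr (not_lt.mpr (by exact_mod_cast h1))
  haveI : (𝓝[<] c).NeBot := nhdsWithin_Iio_self_neBot' ⟨0, hcpos⟩
  exact le_of_tendsto (hΦ.2.2.1 c) (eventually_nhdsWithin_of_forall fun r hr => hmem r hr)

lemma yInv_div_mul_le (hΦ : IsYoung Φ) {s : ℝ≥0∞} {θ : ℝ≥0} (hθ0 : θ ≠ 0) (hθ1 : θ ≤ 1) :
    yInv Φ (s / θ) * θ ≤ yInv Φ s := by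
  refine le_yInv fun r hr => ?_
  have hconv := hΦ.1 (r / θ) 0 θ hθ1
  rw [mul_zero, add_zero, hΦ.2.1, mul_zero, add_zero, mul_comm θ, div_mul_cancel₀ _ hθ0] at hconv
  have hlt : s / θ < Φ (r / θ) := by
    rw [ENNReal.div_lt_iff (Or.inl (by exact_mod_cast hθ0)) (Or.inl ENNReal.coe_ne_top)]
    calc s < Φ r := hr
      _ ≤ (θ : ℝ≥0∞) * Φ (r / θ) := hconv
      _ = Φ (r / θ) * θ := mul_comm _ _
  calc yInv Φ (s / θ) * θ ≤ ((r / θ : ℝ≥0) : ℝ≥0∞) * (θ : ℝ≥0∞) :=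
        mul_le_mul_left (yInv_le hlt) _
    _ = ((r / θ * θ : ℝ≥0) : ℝ≥0∞) := by rw [ENNReal.coe_mul]
    _ = (r : ℝ≥0∞) := by rw [div_mul_cancel₀ _ hθ0]

end Aux
section Aux2

open scoped ENNReal NNReal
open MeasureTheory Metric Filter Set Topology

variable {Φ : ℝ≥0 → ℝ≥0∞} {E : Type*} [MeasurableSpace E] {μ : Measure E}

lemma yExt_zero (hΦ : IsYoung Φ) : yExt Φ 0 = 0 := by
  rw [yExt, if_neg ENNReal.zero_ne_top]
  simpa using hΦ.2.1

lemma luxNorm_le' {g : E → ℝ≥0∞} {lam : ℝ≥0} (hlam : 0 < lam)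
    (h : ∫⁻ x, yExt Φ (g x / lam) ∂μ ≤ 1) : luxNorm μ Φ g ≤ lam := by
  unfold luxNorm
  exact iInf_le_of_le lam (iInf_le_of_le hlam (iInf_le_of_le h le_rfl))

lemma le_luxNorm' {g : E → ℝ≥0∞} {x : ℝ≥0∞}
    (h : ∀ lam : ℝ≥0, 0 < lam → (∫⁻ x, yExt Φ (g x / lam) ∂μ ≤ 1) → x ≤ lam) :
    x ≤ luxNorm μ Φ g := by
  unfold luxNorm
  exact le_iInf fun lam => le_iInf fun hlam => le_iInf fun hc => h lam hlam hc

lemma le_luxNorm (hΦ : IsYoung Φ)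
    {g : E → ℝ≥0∞} {A : Set E} (hA : MeasurableSet A) (hA0 : μ A ≠ 0) (hAt : μ A ≠ ∞)
    {t : ℝ≥0} (hg : ∀ᵐ y ∂μ, y ∈ A → (t : ℝ≥0∞) ≤ g y) :
    (t : ℝ≥0∞) * (yInv Φ (μ A)⁻¹)⁻¹ ≤ luxNorm μ Φ g := by
  set c := yInv Φ (μ A)⁻¹ with hcdef
  have hc0 : c ≠ 0 := (yInv_pos hΦ (ENNReal.inv_pos.mpr hAt)).ne'
  have hct : c ≠ ∞ := (yInv_lt_top hΦ (ENNReal.inv_ne_top.mpr hA0)).ne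
  refine le_luxNorm' fun lam hlam hcond => ?_
  have hlow : A.indicator (fun _ => Φ (t / lam)) ≤ᵐ[μ] fun x => yExt Φ (g x / lam) := by
    filter_upwards [hg] with y hy
    by_cases hyA : y ∈ A
    · rw [indicator_of_mem hyA]
      have hle : ((t / lam : ℝ≥0) : ℝ≥0∞) ≤ g y / lam := by
        rw [ENNReal.coe_div hlam.ne']
        exact ENNReal.div_le_div_right (hy hyA) _
      calc Φ (t / lam) = yExt Φ ((t / lam : ℝ≥0)) := (yExt_coe _).symm
        _ ≤ yExt Φ (g y / lam) := yExt_mono hΦ hle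
    · simp [indicator_of_notMem hyA]
  have hint : Φ (t / lam) * μ A ≤ 1 := by
    calc Φ (t / lam) * μ A = ∫⁻ x, A.indicator (fun _ => Φ (t / lam)) x ∂μ := by
          rw [lintegral_indicator hA, setLIntegral_const]
      _ ≤ ∫⁻ x, yExt Φ (g x / lam) ∂μ := lintegral_mono_ae hlow
      _ ≤ 1 := hcond
  have hΦle : Φ (t / lam) ≤ (μ A)⁻¹ := ENNReal.le_inv_iff_mul_le.mpr hint
  have hle : ((t / lam : ℝ≥0) : ℝ≥0∞) ≤ c := by
    by_contra h
    push_neg at h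
    exact absurd (lt_apply_of_yInv_lt hΦ h) (not_lt.mpr hΦle)
  have h2 : (t : ℝ≥0∞) ≤ c * lam := by
    have h3 := mul_le_mul_left hle (lam : ℝ≥0∞)
    rwa [← ENNReal.coe_mul, div_mul_cancel₀ _ hlam.ne'] at h3
  calc (t : ℝ≥0∞) * c⁻¹ ≤ c * lam * c⁻¹ := mul_le_mul_left h2 _
    _ = (lam : ℝ≥0∞) := by
        rw [mul_comm c, mul_assoc, ENNReal.mul_inv_cancel hc0 hct, mul_one]

lemma luxNorm_le (hΦ : IsYoung Φ)
    {g : E → ℝ≥0∞} {A : Set E} (hA : MeasurableSet A) (hA0 : μ A ≠ 0) (hAt : μ A ≠ ∞)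
    {t : ℝ≥0} (hg1 : ∀ᵐ y ∂μ, y ∈ A → g y ≤ t) (hg2 : ∀ᵐ y ∂μ, y ∉ A → g y = 0) :
    luxNorm μ Φ g ≤ (t : ℝ≥0∞) * (yInv Φ (μ A)⁻¹)⁻¹ := by
  set c := yInv Φ (μ A)⁻¹ with hcdef
  have hc0 : c ≠ 0 := (yInv_pos hΦ (ENNReal.inv_pos.mpr hAt)).ne'
  have hct : c ≠ ∞ := (yInv_lt_top hΦ (ENNReal.inv_ne_top.mpr hA0)).ne
  rcases eq_or_ne t 0 with rfl | ht0
  · -- g = 0 a.e., luxNorm = 0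
    have hg0 : ∀ᵐ y ∂μ, g y = 0 := by
      filter_upwards [hg1, hg2] with y h1 h2
      by_cases hyA : y ∈ A
      · exact le_antisymm (by simpa using h1 hyA) zero_le
      · exact h2 hyA
    have hz : ∀ lam : ℝ≥0, 0 < lam → luxNorm μ Φ g ≤ lam := by
      intro lam hlam
      refine luxNorm_le' hlam ?_
      have : ∫⁻ x, yExt Φ (g x / lam) ∂μ = 0 := by
        rw [← lintegral_zero]
        refine lintegral_congr_ae ?_
        filter_upwards [hg0] with y hy
        rw [hy, ENNReal.zero_div, yExt_zero hΦ]
      rw [this]; exact zero_le_one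
    have : luxNorm μ Φ g ≤ 0 :=
      ENNReal.le_of_forall_pos_le_add fun ε hε _ => by simpa using hz ε hε
    simpa using this
  · set cN := c.toNNReal with hcN
    have hcoe : (cN : ℝ≥0∞) = c := ENNReal.coe_toNNReal hct
    have hcN0 : cN ≠ 0 := by
      simp only [hcN, ne_eq, ENNReal.toNNReal_eq_zero_iff]
      push_neg; exact ⟨hc0, hct⟩
    set lam : ℝ≥0 := t / cN with hlam
    have hlam0 : 0 < lam := by positivity
    have hkey : Φ cN ≤ (μ A)⁻¹ := by
      have := apply_toNNReal_yInv_le hΦ (pos_iff_ne_zero.mpr hc0) hct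
      rwa [← hcdef, ← hcN] at this
    have hup : (fun x => yExt Φ (g x / lam)) ≤ᵐ[μ] A.indicator (fun _ => Φ cN) := by
      filter_upwards [hg1, hg2] with y h1 h2
      by_cases hyA : y ∈ A
      · rw [indicator_of_mem hyA]
        have hle : g y / lam ≤ ((cN : ℝ≥0) : ℝ≥0∞) := by
          have : g y / lam ≤ (t : ℝ≥0∞) / lam := ENNReal.div_le_div_right (h1 hyA) _
          rwa [← ENNReal.coe_div hlam0.ne', hlam, div_div_cancel₀ ht0] at this
        calc yExt Φ (g y / lam) ≤ yExt Φ ((cN : ℝ≥0)) := yExt_mono hΦ hle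
          _ = Φ cN := yExt_coe _
      · rw [indicator_of_notMem hyA, h2 hyA, ENNReal.zero_div, yExt_zero hΦ]
    have hcond : ∫⁻ x, yExt Φ (g x / lam) ∂μ ≤ 1 := by
      calc ∫⁻ x, yExt Φ (g x / lam) ∂μ ≤ ∫⁻ x, A.indicator (fun _ => Φ cN) x ∂μ :=
            lintegral_mono_ae hup
        _ = Φ cN * μ A := by rw [lintegral_indicator hA, setLIntegral_const]
        _ ≤ (μ A)⁻¹ * μ A := mul_le_mul_left hkey _
        _ = 1 := ENNReal.inv_mul_cancel hA0 hAt
    calc luxNorm μ Φ g ≤ (lam : ℝ≥0∞) := luxNorm_le' hlam0 hcond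
      _ = (t : ℝ≥0∞) * c⁻¹ := by
          rw [hlam, ENNReal.coe_div hcN0, hcoe, div_eq_mul_inv]

end Aux2

open scoped ENNReal NNReal
open MeasureTheory Metric Filter Set Topology

theorem statement16 (n : ℕ) (Φ : ℝ≥0 → ℝ≥0∞) (hΦ : IsYoung Φ) (hY : FinPos Φ)
    (hΔ : ∃ C : ℝ≥0, 1 < C ∧ ∀ t r : ℝ≥0, Φ (t * r) ≤ (C : ℝ≥0∞) * Φ t * Φ r)
    (f : Rn n → ℝ) (hf : AEStronglyMeasurable f volume)
    (hloc : ∀ (x : Rn n) (r : ℝ), 0 < r →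
      luxNorm volume Φ ((ball x r).indicator (eabs f)) < ∞)
    (hfin : (⨆ (x : Rn n) (r : ℝ) (_ : 0 < r),
      yInv Φ (volume (ball x r))⁻¹ * luxNorm volume Φ ((ball x r).indicator (eabs f))) < ∞) :
    (⨆ (x : Rn n) (r : ℝ) (_ : 0 < r),
      yInv Φ (volume (ball x r))⁻¹ * luxNorm volume Φ ((ball x r).indicator (eabs f))) =
      eLpNorm f ∞ volume := by
  classical
  set S := (⨆ (x : Rn n) (r : ℝ) (_ : 0 < r),
      yInv Φ (volume (ball x r))⁻¹ * luxNorm volume Φ ((ball x r).indicator (eabs f))) with hS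
  rw [eLpNorm_exponent_top]
  set M := eLpNormEssSup f volume with hM
  refine le_antisymm ?_ ?_
  · -- S ≤ M
    rcases eq_or_ne M ∞ with hMt | hMt
    · rw [hMt]; exact le_top
    set M' := M.toNNReal with hM'
    have hMcoe : (M' : ℝ≥0∞) = M := ENNReal.coe_toNNReal hMt
    refine iSup_le fun x => iSup_le fun r => iSup_le fun hr => ?_
    set B := ball x r with hB
    have hBm : MeasurableSet B := measurableSet_ball
    have hB0 : volume B ≠ 0 := (measure_ball_pos volume x hr).ne'
    have hBt : volume B ≠ ∞ := measure_ball_lt_top.ne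
    have hc0 : yInv Φ (volume B)⁻¹ ≠ 0 := (yInv_pos hΦ (ENNReal.inv_pos.mpr hBt)).ne'
    have hct : yInv Φ (volume B)⁻¹ ≠ ∞ := (yInv_lt_top hΦ (ENNReal.inv_ne_top.mpr hB0)).ne
    have hg1 : ∀ᵐ y ∂(volume : Measure (Rn n)), y ∈ B → B.indicator (eabs f) y ≤ M' := by
      filter_upwards [ae_le_eLpNormEssSup (f := f) (μ := (volume : Measure (Rn n)))]
        with y hy hyB
      rw [indicator_of_mem hyB]
      show ((‖f y‖₊ : ℝ≥0∞)) ≤ (M' : ℝ≥0∞)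
      rw [hMcoe]
      exact hy
    have hg2 : ∀ᵐ y ∂(volume : Measure (Rn n)), y ∉ B → B.indicator (eabs f) y = 0 :=
      Eventually.of_forall fun y hy => indicator_of_notMem hy _
    have hle := luxNorm_le hΦ hBm hB0 hBt hg1 hg2
    calc yInv Φ (volume B)⁻¹ * luxNorm volume Φ (B.indicator (eabs f))
        ≤ yInv Φ (volume B)⁻¹ * ((M' : ℝ≥0∞) * (yInv Φ (volume B)⁻¹)⁻¹) :=
          mul_le_mul_right hle _
      _ = M := by
          rw [mul_comm ((M' : ℝ≥0∞)), ← mul_assoc, ENNReal.mul_inv_cancel hc0 hct, one_mul,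
            hMcoe]
  · -- M ≤ S
    by_contra hcon
    rw [not_le] at hcon
    obtain ⟨t, hSt, htM⟩ := ENNReal.lt_iff_exists_nnreal_btwn.mp hcon
    obtain ⟨t₀, hSt₀, ht₀t⟩ := ENNReal.lt_iff_exists_nnreal_btwn.mp hSt
    have ht₀0 : t₀ ≠ 0 := by
      rintro rfl
      exact absurd hSt₀ (by simp)
    have ht₀t' : t₀ < t := by exact_mod_cast ht₀t
    have ht0 : t ≠ 0 := fun h => ht₀0 (le_antisymm (h ▸ ht₀t'.le) zero_le)
    set θ : ℝ≥0 := t₀ / t with hθ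
    have hθ0 : θ ≠ 0 := div_ne_zero ht₀0 ht0
    have hθ1 : θ < 1 := by
      rw [hθ, div_lt_one (pos_iff_ne_zero.mpr ht0)]; exact ht₀t'
    -- measurable version of |f|
    set f' := hf.mk f with hf'def
    have hff' : f =ᵐ[volume] f' := hf.ae_eq_mk
    set g' : Rn n → ℝ≥0∞ := fun y => ((‖f' y‖₊ : ℝ≥0∞)) with hg'
    have hg'm : Measurable g' := hf.stronglyMeasurable_mk.measurable.nnnorm.coe_nnreal_ennreal
    set Es : Set (Rn n) := {y | (t : ℝ≥0∞) < g' y} with hEs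
    have hEm : MeasurableSet Es := measurableSet_lt measurable_const hg'm
    have hE0 : volume Es ≠ 0 := by
      intro h0
      have hae : ∀ᵐ y ∂(volume : Measure (Rn n)), ¬ ((t : ℝ≥0∞) < g' y) := by
        rw [ae_iff]
        simpa [hEs] using h0
      have hMle : M ≤ (t : ℝ≥0∞) := by
        rw [hM]
        simp only [eLpNormEssSup]
        refine essSup_le_of_ae_le _ ?_
        filter_upwards [hae, hff'] with y hy hyf
        rw [not_lt] at hy
        calc ((‖f y‖₊ : ℝ≥0∞)) = g' y := by rw [hg']; simp [hyf]
          _ ≤ (t : ℝ≥0∞) := hy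
      exact absurd htM (not_lt.mpr hMle)
    -- density point
    have hd := Besicovitch.ae_tendsto_measure_inter_div_of_measurableSet
      (volume : Measure (Rn n)) hEm
    haveI hne : (ae ((volume : Measure (Rn n)).restrict Es)).NeBot :=
      ae_neBot.mpr fun h => hE0 (Measure.restrict_eq_zero.mp h)
    obtain ⟨x, hxE, hx⟩ := ((ae_restrict_mem hEm).and (ae_restrict_of_ae hd)).exists
    simp only [indicator_of_mem hxE, Pi.one_apply] at hx
    have hev : ∀ᶠ ρ in 𝓝[>] (0:ℝ),
        (θ : ℝ≥0∞) < volume (Es ∩ closedBall x ρ) / volume (closedBall x ρ) :=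
      hx.eventually_const_lt (by exact_mod_cast hθ1)
    obtain ⟨ρ, hθρ, hρmem⟩ := (hev.and self_mem_nhdsWithin).exists
    have hρpos : (0:ℝ) < ρ := hρmem
    set B := ball x ρ with hBdef
    have hB0 : volume B ≠ 0 := (measure_ball_pos volume x hρpos).ne'
    have hBt : volume B ≠ ∞ := measure_ball_lt_top.ne
    have hsph : volume (sphere x ρ) = 0 :=
      Measure.addHaar_sphere_of_ne_zero volume x (ne_of_gt hρpos)
    have hballs : volume (closedBall x ρ) = volume B := by
      refine le_antisymm ?_ (measure_mono ball_subset_closedBall)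
      calc volume (closedBall x ρ) = volume (B ∪ sphere x ρ) := by rw [ball_union_sphere]
        _ ≤ volume B + volume (sphere x ρ) := measure_union_le _ _
        _ = volume B := by rw [hsph, add_zero]
    have hEB : (θ : ℝ≥0∞) * volume B ≤ volume (Es ∩ B) := by
      have h1 : (θ : ℝ≥0∞) * volume (closedBall x ρ) ≤ volume (Es ∩ closedBall x ρ) := by
        rw [← ENNReal.le_div_iff_mul_le (Or.inl (hballs ▸ hB0)) (Or.inl (hballs ▸ hBt))]
        exact hθρ.le
      have h2 : volume (Es ∩ closedBall x ρ) ≤ volume (Es ∩ B) := by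
        calc volume (Es ∩ closedBall x ρ) ≤ volume ((Es ∩ B) ∪ sphere x ρ) := by
              refine measure_mono ?_
              rw [← ball_union_sphere]
              rintro y ⟨hyE, hyB | hyS⟩
              · exact Or.inl ⟨hyE, hyB⟩
              · exact Or.inr hyS
          _ ≤ volume (Es ∩ B) + volume (sphere x ρ) := measure_union_le _ _
          _ = volume (Es ∩ B) := by rw [hsph, add_zero]
      calc (θ : ℝ≥0∞) * volume B = (θ : ℝ≥0∞) * volume (closedBall x ρ) := by rw [hballs]
        _ ≤ volume (Es ∩ closedBall x ρ) := h1
        _ ≤ volume (Es ∩ B) := h2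
    set A := Es ∩ B with hAdef
    have hAm : MeasurableSet A := hEm.inter measurableSet_ball
    have hA0 : volume A ≠ 0 := by
      intro h
      rw [h, nonpos_iff_eq_zero, mul_eq_zero] at hEB
      rcases hEB with h' | h'
      · exact hθ0 (by exact_mod_cast h')
      · exact hB0 h'
    have hAt : volume A ≠ ∞ :=
      (lt_of_le_of_lt (measure_mono inter_subset_right) measure_ball_lt_top).ne
    have hg : ∀ᵐ y ∂(volume : Measure (Rn n)), y ∈ A → (t : ℝ≥0∞) ≤ B.indicator (eabs f) y := by
      filter_upwards [hff'] with y hy hyA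
      rw [indicator_of_mem hyA.2]
      have h1 : (t : ℝ≥0∞) < g' y := hyA.1
      calc (t : ℝ≥0∞) ≤ ((‖f' y‖₊ : ℝ≥0∞)) := h1.le
        _ = eabs f y := by rw [eabs]; simp [hy]
    have hlux := le_luxNorm hΦ hAm hA0 hAt hg
    set cA := yInv Φ (volume A)⁻¹ with hcA
    set cB := yInv Φ (volume B)⁻¹ with hcB
    have hcA0 : cA ≠ 0 := (yInv_pos hΦ (ENNReal.inv_pos.mpr hAt)).ne'
    have hcAt : cA ≠ ∞ := (yInv_lt_top hΦ (ENNReal.inv_ne_top.mpr hA0)).ne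
    have hcomp : cA * (θ : ℝ≥0∞) ≤ cB := by
      have h1 : (volume A)⁻¹ ≤ (volume B)⁻¹ / (θ : ℝ≥0∞) := by
        have h2 : (volume A)⁻¹ ≤ ((θ : ℝ≥0∞) * volume B)⁻¹ := ENNReal.inv_le_inv' hEB
        rwa [ENNReal.mul_inv (Or.inl (by exact_mod_cast hθ0)) (Or.inl ENNReal.coe_ne_top),
          mul_comm, ← div_eq_mul_inv] at h2
      calc cA * (θ : ℝ≥0∞) ≤ yInv Φ ((volume B)⁻¹ / (θ : ℝ≥0∞)) * (θ : ℝ≥0∞) :=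
            mul_le_mul_left (yInv_mono h1) _
        _ ≤ cB := yInv_div_mul_le hΦ hθ0 hθ1.le
    have hterm : cB * luxNorm volume Φ (B.indicator (eabs f)) ≤ S :=
      le_iSup₂_of_le x ρ (le_iSup_of_le hρpos le_rfl)
    have hfinal : (t : ℝ≥0∞) * (θ : ℝ≥0∞) ≤ S := by
      calc (t : ℝ≥0∞) * θ = (cA * cA⁻¹) * ((t : ℝ≥0∞) * θ) := by
            rw [ENNReal.mul_inv_cancel hcA0 hcAt, one_mul]
        _ = ((t : ℝ≥0∞) * (cA * θ)) * cA⁻¹ := by ring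
        _ ≤ ((t : ℝ≥0∞) * cB) * cA⁻¹ := mul_le_mul_left (mul_le_mul_right hcomp _) _
        _ = cB * ((t : ℝ≥0∞) * cA⁻¹) := by ring
        _ ≤ cB * luxNorm volume Φ (B.indicator (eabs f)) := mul_le_mul_right hlux _
        _ ≤ S := hterm
    have ht₀S : (t₀ : ℝ≥0∞) ≤ S := by
      have h1 : ((t * θ : ℝ≥0) : ℝ≥0∞) ≤ S := by rw [ENNReal.coe_mul]; exact hfinal
      rwa [hθ, mul_comm, div_mul_cancel₀ _ ht0] at h1
    exact absurd hSt₀ (not_lt.mpr ht₀S)
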